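/- arXiv:1602.05217 — 2 statements merged into one kernel-verified Lean document; each statement's English description precedes it below -/
import Mathlib

section
/- Let d ≥ 2, m, n_1,…,n_d be positive integers, r = (r_1,…,r_d) a tuple of positive integers, and a ∈ (0,1). Let A : ℝ^{n_1×⋯×n_d} → ℝ^m be a linear map satisfying the HOSVD-TRIP at rank 3r = (3r_1,…,3r_d) with constant δ ≤ a/4, and set ε = a²/(17·(1+√(1+δ)·‖A‖_{2→2})²). Let X be a tensor of HOSVD-rank at most r and let y = A(X). Suppose (X^j)_{j≥0} is a sequence of tensors such that for every j ≥ 0 the tensor X^{j+1} has HOSVD-rank at most r and ‖Y^j − X^{j+1}‖_F ≤ (1+ε)·‖Y^j − X‖_F, where Y^j = X^j + A*(y − A(X^j)). Then X^j converges to X in Frobenius norm as j → ∞. -/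
open scoped BigOperators

noncomputable section

/-- The mode-`k` unfolding of an order-`d` tensor, with columns indexed (redundantly)
by full multi-indices: entry `(a, j)` is `X` evaluated at `j` with its `k`-th index
replaced by `a`.  Its rank coincides with the rank of the usual mode-`k` unfolding. -/
def unfold {d : ℕ} (n : Fin d → ℕ) (k : Fin d) (X : (∀ i, Fin (n i)) → ℝ) :
    Matrix (Fin (n k)) (∀ i, Fin (n i)) ℝ :=
  Matrix.of fun a j => X (Function.update j k a)

/-- `X` has HOSVD-rank at most `r`: every mode-`k` unfolding has matrix rank at most `r k`. -/
def hosvdRankLE {d : ℕ} (n r : Fin d → ℕ) (X : EuclideanSpace ℝ (∀ i, Fin (n i))) : Prop :=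
  ∀ k, (unfold n k (fun j => X j)).rank ≤ r k

/-!
Let `u = Xʲ - X`, `v = Xʲ⁺¹ - X` and `w = Yʲ - X = u - A*(A u)`. Every combination `s u + t v`
is a combination of three tensors of HOSVD-rank `≤ r`, hence has HOSVD-rank `≤ 3r`, so by
polarization the TRIP gives `⟪w, v⟫ = ⟪u, v⟫ - ⟪A u, A v⟫ ≤ δ ‖u‖ ‖v‖`, while
`‖w‖ ≤ (1 + √(1 + δ) ‖A‖) ‖u‖`. Expanding the quasi-optimality `‖w - v‖ ≤ (1 + ε) ‖w‖` yields
`‖v‖² ≤ (3/17) a² ‖u‖² + (a/2) ‖u‖ ‖v‖`, i.e. `‖v‖ ≤ (3/4) a ‖u‖`: from the first step on the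
error contracts geometrically.
-/

open Filter Topology
open scoped RealInnerProductSpace InnerProduct

namespace Matrix

variable {K m n : Type*} [Field K] [Fintype n]

theorem rank_add_le (M N : Matrix m n K) : (M + N).rank ≤ M.rank + N.rank := by
  rw [rank, rank, rank, mulVecLin_add]
  have h : LinearMap.range (M.mulVecLin + N.mulVecLin) ≤
      LinearMap.range M.mulVecLin ⊔ LinearMap.range N.mulVecLin := by
    rintro x ⟨v, rfl⟩
    exact Submodule.add_mem_sup ⟨v, rfl⟩ ⟨v, rfl⟩
  exact (Submodule.finrank_mono h).trans (Submodule.finrank_add_le_finrank_add_finrank _ _)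

theorem rank_smul_le [Fintype m] (c : K) (M : Matrix m n K) : (c • M).rank ≤ M.rank := by
  classical
  rw [smul_eq_diagonal_mul]
  exact rank_mul_le_right _ _

end Matrix

section HOSVDRank

variable {d : ℕ} {n r s : Fin d → ℕ}

variable {X Y : EuclideanSpace ℝ (∀ i, Fin (n i))}

theorem hosvdRankLE.mono (hX : hosvdRankLE n r X) (hrs : r ≤ s) : hosvdRankLE n s X :=
  fun k => (hX k).trans (hrs k)

theorem hosvdRankLE.add (hX : hosvdRankLE n r X) (hY : hosvdRankLE n s Y) :
    hosvdRankLE n (r + s) (X + Y) := fun k =>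
  (Matrix.rank_add_le _ _).trans (add_le_add (hX k) (hY k))

theorem hosvdRankLE.smul (hX : hosvdRankLE n r X) (c : ℝ) : hosvdRankLE n r (c • X) := fun k =>
  (Matrix.rank_smul_le c _).trans (hX k)

theorem hosvdRankLE.smul_sub_add_smul_sub {X₀ X₁ : EuclideanSpace ℝ (∀ i, Fin (n i))}
    (hX : hosvdRankLE n r X) (hX₀ : hosvdRankLE n r X₀) (hX₁ : hosvdRankLE n r X₁) (s t : ℝ) :
    hosvdRankLE n (fun k => 3 * r k) (s • (X₀ - X) + t • (X₁ - X)) := by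
  have h := ((hX.smul (-(s + t))).add (hX₀.smul s)).add (hX₁.smul t)
  rw [show s • (X₀ - X) + t • (X₁ - X) = -(s + t) • X + s • X₀ + t • X₁ by module]
  exact h.mono fun k => by simp only [Pi.add_apply]; omega

end HOSVDRank

section InnerProduct

variable {E F : Type*} [NormedAddCommGroup E] [InnerProductSpace ℝ E]
  [NormedAddCommGroup F] [InnerProductSpace ℝ F]

theorem inner_sub_inner_map_eq_polarization (A : E →ₗ[ℝ] F) (x y : E) :
    4 * (⟪x, y⟫ - ⟪A x, A y⟫) =
      (‖x + y‖ ^ 2 - ‖A (x + y)‖ ^ 2) - (‖x - y‖ ^ 2 - ‖A (x - y)‖ ^ 2) := by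
  rw [map_add, map_sub, norm_add_sq_real, norm_sub_sq_real, norm_add_sq_real (A x),
    norm_sub_sq_real (A x)]
  ring

theorem abs_inner_sub_inner_map_le {A : E →ₗ[ℝ] F} {δ : ℝ} {u v : E}
    (h : ∀ s t : ℝ, |‖s • u + t • v‖ ^ 2 - ‖A (s • u + t • v)‖ ^ 2| ≤ δ * ‖s • u + t • v‖ ^ 2) :
    |⟪u, v⟫ - ⟪A u, A v⟫| ≤ δ * (‖u‖ * ‖v‖) := by
  set D := ⟪u, v⟫ - ⟪A u, A v⟫
  have hscaled : ∀ s t : ℝ, 2 * |s * t| * |D| ≤ δ * (s ^ 2 * ‖u‖ ^ 2 + t ^ 2 * ‖v‖ ^ 2) := by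
    intro s t
    have hpol := inner_sub_inner_map_eq_polarization A (s • u) (t • v)
    rw [map_smul, map_smul, real_inner_smul_left, real_inner_smul_right,
      real_inner_smul_left, real_inner_smul_right, sub_eq_add_neg (s • u), ← neg_smul] at hpol
    have hpar := parallelogram_law_with_norm ℝ (s • u) (t • v)
    rw [sub_eq_add_neg (s • u), ← neg_smul, norm_smul, norm_smul, Real.norm_eq_abs,
      Real.norm_eq_abs] at hpar
    have h₁ := h s t
    have h₂ := h s (-t)
    calc 2 * |s * t| * |D| = |4 * (s * (t * ⟪u, v⟫) - s * (t * ⟪A u, A v⟫))| / 2 := by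
          rw [show s * (t * ⟪u, v⟫) - s * (t * ⟪A u, A v⟫) = s * t * D by ring,
            abs_mul 4, abs_mul (s * t), abs_of_pos (by norm_num : (0 : ℝ) < 4)]
          ring
      _ ≤ (|‖s • u + t • v‖ ^ 2 - ‖A (s • u + t • v)‖ ^ 2|
            + |‖s • u + -t • v‖ ^ 2 - ‖A (s • u + -t • v)‖ ^ 2|) / 2 := by
          rw [hpol]; gcongr; exact abs_sub _ _
      _ ≤ δ * (‖s • u + t • v‖ ^ 2 + ‖s • u + -t • v‖ ^ 2) / 2 := by linarith
      _ = δ * (s ^ 2 * ‖u‖ ^ 2 + t ^ 2 * ‖v‖ ^ 2) := by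
          rw [hpar, mul_pow, mul_pow, sq_abs, sq_abs]; ring
  rcases eq_or_lt_of_le (mul_nonneg (norm_nonneg u) (norm_nonneg v)) with h0 | hpos
  · rcases mul_eq_zero.mp h0.symm with hu | hv
    · simp [D, norm_eq_zero.mp hu]
    · simp [D, norm_eq_zero.mp hv]
  · -- `s = ‖v‖`, `t = ‖u‖` balances the two terms on the right
    have := hscaled ‖v‖ ‖u‖
    rw [abs_of_pos (by rwa [mul_comm] at hpos)] at this
    nlinarith

theorem norm_sq_le_of_norm_sub_le {w v : E} {c : ℝ} (h : ‖w - v‖ ≤ c * ‖w‖) :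
    ‖v‖ ^ 2 ≤ (c ^ 2 - 1) * ‖w‖ ^ 2 + 2 * ⟪w, v⟫ := by
  have hsq : ‖w - v‖ ^ 2 ≤ (c * ‖w‖) ^ 2 := pow_le_pow_left₀ (norm_nonneg _) h 2
  rw [norm_sub_sq_real, mul_pow] at hsq
  linarith

end InnerProduct

theorem le_of_sq_le_quadratic {a U V : ℝ} (ha : 0 < a) (hU : 0 ≤ U) (hV : 0 ≤ V)
    (h : V ^ 2 ≤ 3 / 17 * a ^ 2 * U ^ 2 + a / 2 * (U * V)) : V ≤ 3 / 4 * a * U := by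
  nlinarith [mul_nonneg (mul_nonneg ha.le hU) hV, sq_nonneg (V - 3 / 4 * a * U),
    mul_nonneg ha.le hU, mul_pos ha ha]

theorem quasi_optimality_excess_le {a C ε W U : ℝ} (ha : a ∈ Set.Ioo 0 1) (hC : 1 ≤ C)
    (hε : ε = a ^ 2 / (17 * C ^ 2)) (hW : 0 ≤ W) (hWU : W ≤ C * U) :
    ((1 + ε) ^ 2 - 1) * W ^ 2 ≤ 3 / 17 * a ^ 2 * U ^ 2 := by
  have hε0 : 0 ≤ ε := by rw [hε]; positivity
  have hε1 : ε ≤ 1 := by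
    rw [hε, div_le_one (by positivity)]
    nlinarith [ha.1, ha.2]
  have hεC : 3 * ε * C ^ 2 = 3 / 17 * a ^ 2 := by
    rw [hε]; field_simp
  calc ((1 + ε) ^ 2 - 1) * W ^ 2 ≤ 3 * ε * (C * U) ^ 2 := by
        gcongr
        nlinarith
    _ = 3 / 17 * a ^ 2 * U ^ 2 := by rw [mul_pow, ← mul_assoc, hεC]

theorem tendsto_of_norm_sub_le_mul {E : Type*} [SeminormedAddCommGroup E] {x : ℕ → E} {L : E}
    {ρ : ℝ} (hρ0 : 0 ≤ ρ) (hρ1 : ρ < 1) (h : ∀ j, ‖x (j + 1) - L‖ ≤ ρ * ‖x j - L‖) :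
    Tendsto x atTop (𝓝 L) := by
  have hgeom : ∀ j, ‖x j - L‖ ≤ ρ ^ j * ‖x 0 - L‖ := by
    intro j
    induction j with
    | zero => simp
    | succ j ih => calc
        ‖x (j + 1) - L‖ ≤ ρ * ‖x j - L‖ := h j
        _ ≤ ρ * (ρ ^ j * ‖x 0 - L‖) := by gcongr
        _ = ρ ^ (j + 1) * ‖x 0 - L‖ := by ring
  have hlim : Tendsto (fun j => ρ ^ j * ‖x 0 - L‖) atTop (𝓝 0) := by
    simpa using (tendsto_pow_atTop_nhds_zero_of_lt_one hρ0 hρ1).mul_const ‖x 0 - L‖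
  exact tendsto_iff_norm_sub_tendsto_zero.mpr
    (squeeze_zero (fun _ => norm_nonneg _) hgeom hlim)

section QuasiOptimalStep

variable {E F : Type*} [NormedAddCommGroup E] [InnerProductSpace ℝ E] [CompleteSpace E]
  [NormedAddCommGroup F] [InnerProductSpace ℝ F] [CompleteSpace F]

theorem norm_sub_adjoint_map_le {A : E →L[ℝ] F} {δ : ℝ} {u : E} (hAu : ‖A u‖ ≤ √(1 + δ) * ‖u‖) :
    ‖u - (A†) (A u)‖ ≤ (1 + √(1 + δ) * ‖A‖) * ‖u‖ := calc
  ‖u - (A†) (A u)‖ ≤ ‖u‖ + ‖A†‖ * ‖A u‖ :=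
      (norm_sub_le _ _).trans (by gcongr; exact (A†).le_opNorm _)
  _ ≤ ‖u‖ + ‖A‖ * (√(1 + δ) * ‖u‖) := by rw [LinearIsometryEquiv.norm_map]; gcongr
  _ = (1 + √(1 + δ) * ‖A‖) * ‖u‖ := by ring

theorem norm_sub_le_of_quasiOptimal_step {A : E →L[ℝ] F} {δ a ε : ℝ} {X X₀ X₁ : E}
    (ha : a ∈ Set.Ioo 0 1) (hδa : δ ≤ a / 4)
    (hε : ε = a ^ 2 / (17 * (1 + √(1 + δ) * ‖A‖) ^ 2))
    (hRIP : ∀ s t : ℝ, |‖s • (X₀ - X) + t • (X₁ - X)‖ ^ 2 - ‖A (s • (X₀ - X) + t • (X₁ - X))‖ ^ 2|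
      ≤ δ * ‖s • (X₀ - X) + t • (X₁ - X)‖ ^ 2)
    (hX₁ : ‖(X₀ + (A†) (A X - A X₀)) - X₁‖ ≤ (1 + ε) * ‖(X₀ + (A†) (A X - A X₀)) - X‖) :
    ‖X₁ - X‖ ≤ 3 / 4 * a * ‖X₀ - X‖ := by
  set u := X₀ - X
  set v := X₁ - X
  set w := u - (A†) (A u)
  have hw : X₀ + (A†) (A X - A X₀) - X = w := by
    simp only [w, u, map_sub]; abel
  have hwv : X₀ + (A†) (A X - A X₀) - X₁ = w - v := by rw [← hw, sub_sub_sub_cancel_right]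
  rw [hw, hwv] at hX₁
  have hAu : ‖A u‖ ≤ √(1 + δ) * ‖u‖ := by
    have hu := hRIP 1 0
    simp only [one_smul, zero_smul, add_zero] at hu
    rw [← Real.sqrt_sq (norm_nonneg (A u)), ← Real.sqrt_sq (norm_nonneg u),
      ← Real.sqrt_mul' _ (sq_nonneg _)]
    exact Real.sqrt_le_sqrt (by linarith [(abs_le.mp hu).1])
  have hw_inner : ⟪w, v⟫ ≤ δ * (‖u‖ * ‖v‖) := by
    have := abs_inner_sub_inner_map_le (A := A.toLinearMap) hRIP
    rw [show ⟪w, v⟫ = ⟪u, v⟫ - ⟪A u, A v⟫ by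
      rw [inner_sub_left, ContinuousLinearMap.adjoint_inner_left]]
    exact (abs_le.mp this).2
  have hv := norm_sq_le_of_norm_sub_le hX₁
  have hexcess := quasi_optimality_excess_le ha
    (le_add_of_nonneg_right (by positivity)) hε (norm_nonneg w) (norm_sub_adjoint_map_le hAu)
  apply le_of_sq_le_quadratic ha.1 (norm_nonneg _) (norm_nonneg _)
  nlinarith [mul_nonneg (norm_nonneg u) (norm_nonneg v)]

end QuasiOptimalStep

theorem classical_TIHT_convergence_general
    (d m : ℕ) (n r : Fin d → ℕ)
    (a : ℝ) (ha : a ∈ Set.Ioo (0 : ℝ) 1)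
    (A : EuclideanSpace ℝ (∀ i, Fin (n i)) →L[ℝ] EuclideanSpace ℝ (Fin m))
    (δ : ℝ) (hδa : δ ≤ a / 4)
    (hTRIP : ∀ Z : EuclideanSpace ℝ (∀ i, Fin (n i)),
      hosvdRankLE n (fun k => 3 * r k) Z →
        (1 - δ) * ‖Z‖ ^ 2 ≤ ‖A Z‖ ^ 2 ∧ ‖A Z‖ ^ 2 ≤ (1 + δ) * ‖Z‖ ^ 2)
    (ε : ℝ)
    (hε : ε = a ^ 2 / (17 * (1 + Real.sqrt (1 + δ) * ‖A‖) ^ 2))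
    (X : EuclideanSpace ℝ (∀ i, Fin (n i))) (hX : hosvdRankLE n r X)
    (y : EuclideanSpace ℝ (Fin m)) (hy : y = A X)
    (Xs : ℕ → EuclideanSpace ℝ (∀ i, Fin (n i)))
    (hrank : ∀ j : ℕ, hosvdRankLE n r (Xs (j + 1)))
    (hiter : ∀ j : ℕ,
      ‖(Xs j + (ContinuousLinearMap.adjoint A) (y - A (Xs j))) - Xs (j + 1)‖
        ≤ (1 + ε) * ‖(Xs j + (ContinuousLinearMap.adjoint A) (y - A (Xs j))) - X‖) :
    Filter.Tendsto Xs Filter.atTop (nhds X) := by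
  subst hy
  have hstep (j : ℕ) : ‖Xs (j + 1 + 1) - X‖ ≤ 3 / 4 * a * ‖Xs (j + 1) - X‖ := by
    refine norm_sub_le_of_quasiOptimal_step ha hδa hε (fun s t => ?_) (hiter (j + 1))
    have hZ := hTRIP _ (hX.smul_sub_add_smul_sub (hrank j) (hrank (j + 1)) s t)
    exact abs_sub_le_iff.mpr ⟨by linarith [hZ.1], by linarith [hZ.2]⟩
  exact (tendsto_add_atTop_iff_nat 1).mp
    (tendsto_of_norm_sub_le_mul (by linarith [ha.1]) (by linarith [ha.2]) hstep)

theorem classical_TIHT_convergence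
    (d m : ℕ) (hd : 2 ≤ d) (hm : 0 < m) (n r : Fin d → ℕ)
    (hn : ∀ i, 0 < n i) (hr : ∀ i, 0 < r i)
    (a : ℝ) (ha : a ∈ Set.Ioo (0 : ℝ) 1)
    (A : EuclideanSpace ℝ (∀ i, Fin (n i)) →L[ℝ] EuclideanSpace ℝ (Fin m))
    (δ : ℝ) (hδ0 : 0 ≤ δ) (hδa : δ ≤ a / 4)
    (hTRIP : ∀ Z : EuclideanSpace ℝ (∀ i, Fin (n i)),
      hosvdRankLE n (fun k => 3 * r k) Z →
        (1 - δ) * ‖Z‖ ^ 2 ≤ ‖A Z‖ ^ 2 ∧ ‖A Z‖ ^ 2 ≤ (1 + δ) * ‖Z‖ ^ 2)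
    (ε : ℝ)
    (hε : ε = a ^ 2 / (17 * (1 + Real.sqrt (1 + δ) * ‖A‖) ^ 2))
    (X : EuclideanSpace ℝ (∀ i, Fin (n i))) (hX : hosvdRankLE n r X)
    (y : EuclideanSpace ℝ (Fin m)) (hy : y = A X)
    (Xs : ℕ → EuclideanSpace ℝ (∀ i, Fin (n i)))
    (hrank : ∀ j : ℕ, hosvdRankLE n r (Xs (j + 1)))
    (hiter : ∀ j : ℕ,
      ‖(Xs j + (ContinuousLinearMap.adjoint A) (y - A (Xs j))) - Xs (j + 1)‖
        ≤ (1 + ε) * ‖(Xs j + (ContinuousLinearMap.adjoint A) (y - A (Xs j))) - X‖) :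
    Filter.Tendsto Xs Filter.atTop (nhds X) :=
  classical_TIHT_convergence_general d m n r a ha A δ hδa hTRIP ε hε X hX y hy Xs hrank hiter
end
end

section
/- Let d ≥ 1, let n_1,…,n_d and r_1,…,r_d be positive integers, and fix j ∈ {1,…,d}. Let S : Fin r_1 × ⋯ × Fin r_d → ℝ be a tensor whose mode-j subtensors are pairwise orthogonal, i.e., for all p ≠ q in Fin r_j, Σ over all multi-indices k with k_j = p paired against the corresponding multi-index with k_j replaced by q of S(k)·S(k with k_j := q) equals 0 (⟨S_{k_j=p}, S_{k_j=q}⟩ = 0). For each l ≠ j let U_l ∈ ℝ^{n_l×r_l} be a matrix with orthonormal columns, and let V ∈ ℝ^{n_j×r_j} be arbitrary. Define the tensor Y : Fin n_1 × ⋯ × Fin n_d → ℝ by Y(i_1,…,i_d) = Σ_{k_1,…,k_d} S(k_1,…,k_d)·V(i_j,k_j)·Π_{l≠j} U_l(i_l,k_l). Then ‖Y‖_F ≤ ‖V‖_{1,2}·‖S‖_F, where ‖V‖_{1,2} = max_{k} (Σ_{i} V(i,k)²)^{1/2} is the maximal Euclidean column norm of V. -/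
open scoped BigOperators

noncomputable section

/-- Frobenius norm of a tensor given as a real-valued function on a finite index set. -/
def frob {ι : Type*} [Fintype ι] (X : ι → ℝ) : ℝ :=
  Real.sqrt (∑ j, X j ^ 2)

/-!
Expanding `‖Y‖²` and using `Uₗᵀ Uₗ = 1` in every mode `l ≠ j` collapses the double sum over core
indices `k, k'` to pairs that differ only in mode `j`, weighted by the Gram matrix `C = Vᵀ V`.
Summing over all values of the mode-`j` index turns this into
`∑ p q, C p q ⟨S_{k_j=p}, S_{k_j=q}⟩`, in which only the diagonal survives by orthogonality, and
`C p p = ‖V_{:,p}‖² ≤ ‖V‖²_{1,2}`.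
-/

open Finset Function
open scoped Matrix

section Tucker

variable {ι : Type*} [Fintype ι] [DecidableEq ι] {κ : ι → Type*}

theorem prod_update_apply {m : ι → Type*} (A : ∀ i, Matrix (m i) (κ i) ℝ) (j : ι)
    (B : Matrix (m j) (κ j) ℝ) (x : ∀ i, m i) (k : ∀ i, κ i) :
    ∏ i, update A j B i (x i) (k i) = B (x j) (k j) * ∏ i ∈ univ.erase j, A i (x i) (k i) := by
  rw [← mul_prod_erase univ _ (mem_univ j), update_self]
  exact congrArg _ (prod_congr rfl fun i hi => by rw [update_of_ne (ne_of_mem_erase hi)])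

variable [∀ i, Fintype (κ i)]

/-- The Tucker product `S ×₁ A₁ ×₂ ⋯ ×_d A_d`. -/
def tuckerProduct {m : ι → Type*} (S : (∀ i, κ i) → ℝ) (A : ∀ i, Matrix (m i) (κ i) ℝ)
    (x : ∀ i, m i) : ℝ :=
  ∑ k, S k * ∏ i, A i (x i) (k i)

theorem sum_sum_update_eq_card_smul {M : Type*} [AddCommMonoid M] (j : ι)
    (f : (∀ i, κ i) → M) :
    ∑ k, ∑ p, f (update k j p) = Fintype.card (κ j) • ∑ k, f k := by
  -- `(k, p) ↦ (update k j p, k j)` is an involution of `(∀ i, κ i) × κ j`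
  have hinv : Involutive fun x : (∀ i, κ i) × κ j => (update x.1 j x.2, x.1 j) := by
    rintro ⟨k, p⟩
    simp
  calc ∑ k, ∑ p, f (update k j p) = ∑ x : (∀ i, κ i) × κ j, f (hinv.toPerm _ x).1 :=
        (Fintype.sum_prod_type' _).symm
    _ = ∑ x : (∀ i, κ i) × κ j, f x.1 := Equiv.sum_comp _ fun x : (∀ i, κ i) × κ j => f x.1
    _ = Fintype.card (κ j) • ∑ k, f k := by
        rw [Fintype.sum_prod_type]
        simp only [sum_const, card_univ, smul_sum]

theorem sum_sq_tuckerProduct {m : ι → Type*} [∀ i, Fintype (m i)] (S : (∀ i, κ i) → ℝ)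
    (A : ∀ i, Matrix (m i) (κ i) ℝ) :
    ∑ x, tuckerProduct S A x ^ 2 =
      ∑ k, ∑ k', S k * S k' * ∏ i, ((A i)ᵀ * A i) (k i) (k' i) := by
  simp only [Matrix.mul_apply, Matrix.transpose_apply, Fintype.prod_sum, mul_sum]
  simp only [tuckerProduct, sq, sum_mul_sum]
  rw [sum_comm]
  refine sum_congr rfl fun k _ => ?_
  rw [sum_comm]
  refine sum_congr rfl fun k' _ => sum_congr rfl fun x _ => by rw [prod_mul_distrib]; ring

theorem sum_mul_prod_apply_of_eq_one [∀ i, DecidableEq (κ i)] (j : ι)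
    (G : ∀ i, Matrix (κ i) (κ i) ℝ) (hG : ∀ i, i ≠ j → G i = 1) (k : ∀ i, κ i)
    (f : (∀ i, κ i) → ℝ) :
    ∑ k', f k' * ∏ i, G i (k i) (k' i) = ∑ q, G j (k j) q * f (update k j q) := by
  rw [← sum_subset (subset_univ (univ.image (update k j))),
    sum_image fun p _ q _ h => update_injective k j h]
  · refine sum_congr rfl fun q _ => ?_
    rw [prod_eq_single j (fun i _ hij => by simp [hG i hij, hij]) (by simp), update_self, mul_comm]
  · intro k' _ hk'
    obtain ⟨i, hij, hi⟩ : ∃ i, i ≠ j ∧ k i ≠ k' i := by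
      by_contra! h
      exact hk' (mem_image.mpr ⟨k' j, mem_univ _, funext fun i => by
        by_cases hij : i = j
        · subst hij; simp
        · simp [hij, h i hij]⟩)
    rw [prod_eq_zero (mem_univ i) (by simp [hG i hij, hi]), mul_zero]

theorem sum_sq_tuckerProduct_of_orthonormal [∀ i, DecidableEq (κ i)] {m : ι → Type*}
    [∀ i, Fintype (m i)] (j : ι) (S : (∀ i, κ i) → ℝ) (A : ∀ i, Matrix (m i) (κ i) ℝ)
    (hA : ∀ i, i ≠ j → (A i)ᵀ * A i = 1) :
    ∑ x, tuckerProduct S A x ^ 2 =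
      ∑ k, ∑ q, ((A j)ᵀ * A j) (k j) q * (S k * S (update k j q)) := by
  rw [sum_sq_tuckerProduct]
  exact sum_congr rfl fun k _ =>
    sum_mul_prod_apply_of_eq_one j (fun i => (A i)ᵀ * A i) hA k fun k' => S k * S k'

theorem card_smul_sum_sum_mul_update_eq [∀ i, DecidableEq (κ i)] (j : ι) (S : (∀ i, κ i) → ℝ)
    (horth : ∀ p q : κ j, p ≠ q → ∑ k, S (update k j p) * S (update k j q) = 0)
    (C : Matrix (κ j) (κ j) ℝ) :
    Fintype.card (κ j) • ∑ k, ∑ q, C (k j) q * (S k * S (update k j q)) =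
      ∑ p, C p p * ∑ k, S (update k j p) ^ 2 := by
  rw [← sum_sum_update_eq_card_smul, sum_comm]
  refine sum_congr rfl fun p _ => ?_
  simp only [update_self, update_idem]
  rw [sum_comm, sum_eq_single p (fun q _ hqp => by rw [← mul_sum, horth p q hqp.symm, mul_zero])
    (by simp), mul_sum]
  simp only [sq]

theorem sum_sum_mul_update_le [∀ i, DecidableEq (κ i)] (j : ι) (S : (∀ i, κ i) → ℝ)
    (horth : ∀ p q : κ j, p ≠ q → ∑ k, S (update k j p) * S (update k j q) = 0)
    (C : Matrix (κ j) (κ j) ℝ) (c : ℝ) (hC : ∀ p, C p p ≤ c) :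
    ∑ k, ∑ q, C (k j) q * (S k * S (update k j q)) ≤ c * ∑ k, S k ^ 2 := by
  rcases isEmpty_or_nonempty (κ j) with hj | hj
  · have : IsEmpty (∀ i, κ i) := isEmpty_pi.mpr ⟨j, hj⟩
    simp
  have hcard : (0 : ℝ) < Fintype.card (κ j) := by exact_mod_cast Fintype.card_pos
  refine le_of_mul_le_mul_left ?_ hcard
  calc (Fintype.card (κ j) : ℝ) * ∑ k, ∑ q, C (k j) q * (S k * S (update k j q))
      = ∑ p, C p p * ∑ k, S (update k j p) ^ 2 := by
        rw [← nsmul_eq_mul, card_smul_sum_sum_mul_update_eq j S horth]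
    _ ≤ ∑ p, c * ∑ k, S (update k j p) ^ 2 :=
        sum_le_sum fun p _ => mul_le_mul_of_nonneg_right (hC p) (by positivity)
    _ = Fintype.card (κ j) * (c * ∑ k, S k ^ 2) := by
        rw [← mul_sum, sum_comm, sum_sum_update_eq_card_smul j fun k => S k ^ 2, nsmul_eq_mul]
        ring

end Tucker

theorem tucker_product_general_factor_bound_general
    (d : ℕ) (n r : Fin d → ℕ)
    (j : Fin d) (S : (∀ i, Fin (r i)) → ℝ)
    (horth : ∀ p q : Fin (r j), p ≠ q →
      ∑ k : ∀ i, Fin (r i), S (Function.update k j p) * S (Function.update k j q) = 0)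
    (U : ∀ l, Matrix (Fin (n l)) (Fin (r l)) ℝ)
    (hU : ∀ l, l ≠ j → (U l).transpose * U l = 1)
    (V : Matrix (Fin (n j)) (Fin (r j)) ℝ) :
    frob (fun i : ∀ l, Fin (n l) => ∑ k : ∀ l, Fin (r l),
        S k * V (i j) (k j) * ∏ l ∈ Finset.univ.erase j, U l (i l) (k l))
      ≤ (⨆ c : Fin (r j), Real.sqrt (∑ i, V i c ^ 2)) * frob S := by
  set M := ⨆ c : Fin (r j), Real.sqrt (∑ i, V i c ^ 2)
  have hY : (fun i : ∀ l, Fin (n l) => ∑ k : ∀ l, Fin (r l),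
      S k * V (i j) (k j) * ∏ l ∈ univ.erase j, U l (i l) (k l)) =
      tuckerProduct S (update U j V) := by
    funext i
    simp only [tuckerProduct, prod_update_apply, mul_assoc]
  have hA : ∀ l, l ≠ j → (update U j V l)ᵀ * update U j V l = 1 := fun l hl => by
    rw [update_of_ne hl, hU l hl]
  have hM : 0 ≤ M := Real.iSup_nonneg fun _ => Real.sqrt_nonneg _
  have hcol : ∀ p, ((update U j V j)ᵀ * update U j V j) p p ≤ M ^ 2 := fun p => by
    simp only [update_self, Matrix.mul_apply, Matrix.transpose_apply, ← sq]
    exact (Real.sqrt_le_iff.mp (le_ciSup (f := fun c => Real.sqrt (∑ i, V i c ^ 2))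
      (Set.finite_range _).bddAbove p)).2
  rw [hY, frob, frob, sum_sq_tuckerProduct_of_orthonormal j S _ hA]
  calc Real.sqrt _ ≤ Real.sqrt (M ^ 2 * ∑ k, S k ^ 2) :=
        Real.sqrt_le_sqrt (sum_sum_mul_update_le j S horth _ _ hcol)
    _ = M * Real.sqrt (∑ k, S k ^ 2) := by rw [Real.sqrt_mul' _ (by positivity), Real.sqrt_sq hM]

theorem tucker_product_general_factor_bound
    (d : ℕ) (hd : 1 ≤ d) (n r : Fin d → ℕ)
    (hn : ∀ i, 0 < n i) (hr : ∀ i, 0 < r i)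
    (j : Fin d) (S : (∀ i, Fin (r i)) → ℝ)
    (horth : ∀ p q : Fin (r j), p ≠ q →
      ∑ k : ∀ i, Fin (r i), S (Function.update k j p) * S (Function.update k j q) = 0)
    (U : ∀ l, Matrix (Fin (n l)) (Fin (r l)) ℝ)
    (hU : ∀ l, l ≠ j → (U l).transpose * U l = 1)
    (V : Matrix (Fin (n j)) (Fin (r j)) ℝ) :
    frob (fun i : ∀ l, Fin (n l) => ∑ k : ∀ l, Fin (r l),
        S k * V (i j) (k j) * ∏ l ∈ Finset.univ.erase j, U l (i l) (k l))
      ≤ (⨆ c : Fin (r j), Real.sqrt (∑ i, V i c ^ 2)) * frob S :=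
  tucker_product_general_factor_bound_general d n r j S horth U hU V
end
end
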